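/- Let (a_n)_{n≥1} be a sequence of bounded operators on a complex Hilbert space H satisfying the canonical anticommutation relations, and let Ω ∈ H be a unit vector with a_n Ω = 0 for all n ≥ 1 which is cyclic for the *-algebra generated by {a_n : n ≥ 1} (so (H, (a_n), Ω) is a Fock representation). Define for n ≥ 1: c_n := (−1)^{n−1}(a_1 a_1^* a_{2n+1}^* + a_1^* a_1 a_{2n+1}) and d_n := (−1)^{n−1}(a_1 a_1^* a_{2n} − a_1^* a_1 a_{2n}^*), and set Ω^* := a_1^* Ω. Let V be the closed linear span of the vectors c_{k_1}⋯c_{k_p} d_{l_1}^*⋯d_{l_q}^* Ω (over all p, q ≥ 0 and indices k_1,…,k_p, l_1,…,l_q ≥ 1), and let V^* be the closed linear span of the vectors d_{k_1}⋯d_{k_p} c_{l_1}^*⋯c_{l_q}^* Ω^*. Then V and V^* are orthogonal, each is invariant under every c_n, d_n, c_n^*, d_n^*, and H = V ⊕ V^*. That is, under the mixture of fermions the Fock representation decomposes as the direct sum of the infinite wedge representation (with Dirac vacuum Ω) and the dual infinite wedge representation (with dual Dirac vacuum Ω^*). -/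

import Mathlib

/-!
Write `α = a₁`, `P = αα*` and `Q = α*α`, complementary projections. After the relabelling
`a_k ↦ ±a_k` that absorbs the signs, `c_n = P a_{2n+1}^* + Q a_{2n+1}` and
`d_n = P a_{2n} - Q a_{2n}^*`. The `a_k` with `k ≥ 2` anticommute with `α` and `α*`, so they
commute with `P` and `Q`, and on such elements the mixing `(u, v) ↦ P u + Q v` is a
`*`-homomorphism. Hence the `c_n`, `d_n` satisfy the CAR, `Ω` is a vacuum for them, and `V`,
`V^*` are invariant under the `c_n`, `d_n` and their adjoints.

Conjugation by `α` or `α*` sends `c_n ↦ -c_n^*` and `d_n ↦ d_n^*`. Therefore `α` kills `V` and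
maps `V^*` into `V`, while `α*` kills `V^*` and maps `V` into `V^*`; together with
`αα* + α*α = 1` this gives `V ⊥ V^*`. Finally `a_{2n+1} = P c_n^* + Q c_n` and
`a_{2n} = P d_n - Q d_n^*`, so `V ⊕ V^*` is invariant under every `a_n` and `a_n^*`. It contains
`Ω`, so it is dense by cyclicity, and as an orthogonal sum of closed subspaces it is all of `H`.
-/

noncomputable section

/-- The canonical anticommutation relations for a sequence `a_1, a_2, …`
(indexed by `n ≥ 1`). -/
def SatisfiesCAR {A : Type*} [Ring A] [StarRing A] (a : ℕ → A) : Prop :=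
  ∀ n m : ℕ, 1 ≤ n → 1 ≤ m →
    (a n * star (a m) + star (a m) * a n = if n = m then (1 : A) else 0) ∧
    a n * a m + a m * a n = 0

/-- The mixed fermion `c_n = b_{n-1/2} = (-1)^{n-1}(a_1 a_1^* a_{2n+1}^* + a_1^* a_1 a_{2n+1})`. -/
def mixedC {A : Type*} [Ring A] [StarRing A] (a : ℕ → A) (n : ℕ) : A :=
  (-1 : A) ^ (n - 1) *
    (a 1 * star (a 1) * star (a (2 * n + 1)) + star (a 1) * a 1 * a (2 * n + 1))

/-- The mixed fermion `d_n = b_{-(n-1/2)} = (-1)^{n-1}(a_1 a_1^* a_{2n} - a_1^* a_1 a_{2n}^*)`. -/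
def mixedD {A : Type*} [Ring A] [StarRing A] (a : ℕ → A) (n : ℕ) : A :=
  (-1 : A) ^ (n - 1) *
    (a 1 * star (a 1) * a (2 * n) - star (a 1) * a 1 * star (a (2 * n)))

/-- The closed span of the vectors `c_{k_1} ⋯ c_{k_p} d_{l_1}^* ⋯ d_{l_q}^* v`. -/
def wedgeSpace {H : Type*} [NormedAddCommGroup H] [InnerProductSpace ℂ H]
    [CompleteSpace H] (c d : ℕ → H →L[ℂ] H) (v : H) : Submodule ℂ H :=
  (Submodule.span ℂ {x : H | ∃ K L : List ℕ, (∀ k ∈ K, 1 ≤ k) ∧ (∀ l ∈ L, 1 ≤ l) ∧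
      x = ((K.map c).prod * (L.map fun l => star (d l)).prod) v}).topologicalClosure


section Anticommutation

variable {R : Type*} [Ring R]

def Anticommute (x y : R) : Prop := x * y + y * x = 0

namespace Anticommute

variable {x y z : R}

theorem symm (h : Anticommute x y) : Anticommute y x := by
  rw [Anticommute, add_comm]; exact h

theorem eq (h : Anticommute x y) : x * y + y * x = 0 := h

theorem eq_neg (h : Anticommute x y) : x * y = -(y * x) :=
  eq_neg_of_add_eq_zero_left h

theorem semiconjBy (h : Anticommute x y) : SemiconjBy x y (-y) := by
  rw [SemiconjBy, h.eq_neg, neg_mul]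

theorem star [StarRing R] (h : Anticommute x y) : Anticommute (star x) (star y) := by
  have := congrArg Star.star h
  rwa [star_add, star_mul, star_mul, star_zero, add_comm] at this

theorem neg_right (h : Anticommute x y) : Anticommute x (-y) := by
  rw [Anticommute, mul_neg, neg_mul, ← neg_add, h, neg_zero]

theorem neg_left (h : Anticommute x y) : Anticommute (-x) y :=
  h.symm.neg_right.symm

theorem commute_mul_left (hx : Anticommute x z) (hy : Anticommute y z) : Commute (x * y) z := by
  rw [Commute, SemiconjBy, mul_assoc, hy.eq_neg, mul_neg, ← mul_assoc, hx.eq_neg, neg_mul,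
    neg_neg, mul_assoc]

end Anticommute

theorem SemiconjBy.list_prod_map {ι : Type*} {z : R} {f g : ι → R} :
    ∀ l : List ι, (∀ i ∈ l, SemiconjBy z (f i) (g i)) →
      SemiconjBy z (l.map f).prod (l.map g).prod
  | [], _ => SemiconjBy.one_right z
  | i :: l, h => by
    simpa using (h i List.mem_cons_self).mul_right
      (SemiconjBy.list_prod_map l fun j hj => h j (List.mem_cons_of_mem i hj))

end Anticommutation

section Fermion

variable {R : Type*} [Ring R] [StarRing R] {α : R}

def IsFermion (α : R) : Prop := α * α = 0 ∧ α * star α + star α * α = 1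

theorem isFermion_star (hα : IsFermion α) : IsFermion (star α) := by
  refine ⟨by rw [← star_mul, hα.1, star_zero], ?_⟩
  rw [star_star, add_comm]; exact hα.2

namespace IsFermion

theorem star_mul_self_eq (hα : IsFermion α) : star α * α = 1 - α * star α :=
  eq_sub_of_add_eq' hα.2

theorem mul_mul_star_self (hα : IsFermion α) : α * (α * star α) = 0 := by
  rw [← mul_assoc, hα.1, zero_mul]

theorem mul_star_mul_self (hα : IsFermion α) : α * (star α * α) = α := by
  rw [hα.star_mul_self_eq, mul_sub, mul_one, hα.mul_mul_star_self, sub_zero]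

theorem mul_star_self_mul (hα : IsFermion α) : α * star α * α = α := by
  rw [mul_assoc, hα.mul_star_mul_self]

theorem star_mul_self_mul (hα : IsFermion α) : star α * α * α = 0 := by
  rw [mul_assoc, hα.1, mul_zero]

theorem isIdempotentElem (hα : IsFermion α) : IsIdempotentElem (α * star α) := by
  rw [IsIdempotentElem, ← mul_assoc, hα.mul_star_self_mul]

theorem isIdempotentElem_star_mul_self (hα : IsFermion α) : IsIdempotentElem (star α * α) := by
  simpa using (isFermion_star hα).isIdempotentElem

theorem mul_star_self_mul_star_mul_self (hα : IsFermion α) :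
    α * star α * (star α * α) = 0 := by
  rw [← mul_assoc, mul_assoc α, ← star_mul, hα.1, star_zero, mul_zero, zero_mul]

theorem star_mul_self_mul_mul_star_self (hα : IsFermion α) :
    star α * α * (α * star α) = 0 := by
  rw [← mul_assoc, hα.star_mul_self_mul, zero_mul]

theorem commute_star_mul_self {u : R} (hα : IsFermion α) (h : Commute (α * star α) u) :
    Commute (star α * α) u := by
  rw [hα.star_mul_self_eq]; exact (Commute.one_left u).sub_left h

end IsFermion

end Fermion

section Mix

variable {R : Type*} [Ring R] [StarRing R] {α : R}

def mix (α u v : R) : R := α * star α * u + star α * α * v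

theorem mix_add_mix (u v u' v' : R) : mix α u v + mix α u' v' = mix α (u + u') (v + v') := by
  simp only [mix, mul_add]; abel

theorem neg_mix (u v : R) : -mix α u v = mix α (-u) (-v) := by
  simp only [mix, mul_neg, neg_add]

theorem IsFermion.mix_self (hα : IsFermion α) (u : R) : mix α u u = u := by
  rw [mix, ← add_mul, hα.2, one_mul]

theorem IsFermion.mix_mix (hα : IsFermion α) (u v u' v' : R) :
    mix α (mix α u v) (mix α u' v') = mix α u v' := by
  simp only [mix, mul_add, ← mul_assoc, hα.isIdempotentElem.eq,
    hα.isIdempotentElem_star_mul_self.eq, hα.mul_star_self_mul_star_mul_self,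
    hα.star_mul_self_mul_mul_star_self, zero_mul, add_zero, zero_add]

theorem IsFermion.mix_mul_mix (hα : IsFermion α) {u v : R} (hu : Commute (α * star α) u)
    (hv : Commute (α * star α) v) (u' v' : R) :
    mix α u v * mix α u' v' = mix α (u * u') (v * v') := by
  have hP : mix α u v * (α * star α) = α * star α * u := by
    rw [mix, add_mul, mul_assoc, ← hu.eq, ← mul_assoc, hα.isIdempotentElem.eq,
      mul_assoc (star α * α), ← hv.eq, ← mul_assoc, hα.star_mul_self_mul_mul_star_self,
      zero_mul, add_zero]
  have hQ : mix α u v * (star α * α) = star α * α * v := by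
    rw [mix, add_mul, mul_assoc (α * star α), ← (hα.commute_star_mul_self hu).eq, ← mul_assoc,
      hα.mul_star_self_mul_star_mul_self, zero_mul, zero_add, mul_assoc,
      ← (hα.commute_star_mul_self hv).eq, ← mul_assoc, hα.isIdempotentElem_star_mul_self.eq]
  rw [show mix α u' v' = α * star α * u' + star α * α * v' from rfl, mul_add,
    ← mul_assoc (mix α u v) (α * star α), ← mul_assoc (mix α u v) (star α * α), hP, hQ]
  simp only [mix, mul_assoc]

theorem IsFermion.mix_anticomm (hα : IsFermion α) {u v u' v' : R}
    (hu : Commute (α * star α) u) (hv : Commute (α * star α) v) (hu' : Commute (α * star α) u')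
    (hv' : Commute (α * star α) v') :
    mix α u v * mix α u' v' + mix α u' v' * mix α u v =
      mix α (u * u' + u' * u) (v * v' + v' * v) := by
  rw [hα.mix_mul_mix hu hv, hα.mix_mul_mix hu' hv', mix_add_mix]

theorem IsFermion.star_mix (hα : IsFermion α) {u v : R} (hu : Commute (α * star α) u)
    (hv : Commute (α * star α) v) : star (mix α u v) = mix α (star u) (star v) := by
  have hP : star (α * star α) = α * star α := by rw [star_mul, star_star]
  have hQ : star (star α * α) = star α * α := by rw [star_mul, star_star]
  rw [mix, star_add, star_mul (α * star α) u, star_mul (star α * α) v, ← hu.star_star.eq,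
    ← (hα.commute_star_mul_self hv).star_star.eq, hP, hQ, mix]

theorem IsFermion.semiconjBy_mix (hα : IsFermion α) (u : R) {v w : R} (hv : Anticommute α v)
    (hw : Commute (α * star α) w) : SemiconjBy α (mix α u v) (mix α (-v) w) := by
  have hQw : star α * α * w * α = 0 := by
    rw [(hα.commute_star_mul_self hw).eq, mul_assoc, hα.star_mul_self_mul, mul_zero]
  simp only [SemiconjBy, mix, mul_add, add_mul, hQw, ← mul_assoc, hα.1, zero_mul, zero_add,
    add_zero, hα.mul_star_self_mul]
  rw [mul_neg, neg_mul, mul_assoc, hv.symm.eq_neg, mul_neg, neg_neg, ← mul_assoc,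
    hα.mul_star_self_mul]

theorem IsFermion.anticommute_mix (hα : IsFermion α) {u v u' v' : R}
    (hu : Commute (α * star α) u) (hv : Commute (α * star α) v) (hu' : Commute (α * star α) u')
    (hv' : Commute (α * star α) v') (huu : Anticommute u u') (hvv : Anticommute v v') :
    Anticommute (mix α u v) (mix α u' v') := by
  rw [Anticommute, hα.mix_anticomm hu hv hu' hv', huu.eq, hvv.eq, mix, mul_zero, mul_zero,
    add_zero]

theorem Subalgebra.mix_mem {S A : Type*} [CommSemiring S] [Ring A] [StarRing A] [Algebra S A]
    {B : Subalgebra S A} {α u v : A} (hα : α ∈ B) (hα' : star α ∈ B) (hu : u ∈ B) (hv : v ∈ B) :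
    mix α u v ∈ B :=
  add_mem (mul_mem (mul_mem hα hα') hu) (mul_mem (mul_mem hα' hα) hv)

end Mix

def JointCAR {R : Type*} [Ring R] [StarRing R] (c d : ℕ → R) : Prop :=
  SatisfiesCAR c ∧ SatisfiesCAR d ∧
    ∀ n m : ℕ, 1 ≤ n → 1 ≤ m → Anticommute (c n) (d m) ∧ Anticommute (c n) (star (d m))

namespace JointCAR

variable {R : Type*} [Ring R] [StarRing R] {c d : ℕ → R} {n m : ℕ}

theorem anticommute (h : JointCAR c d) (hn : 1 ≤ n) (hm : 1 ≤ m) : Anticommute (c n) (d m) :=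
  (h.2.2 n m hn hm).1

theorem anticommute_star (h : JointCAR c d) (hn : 1 ≤ n) (hm : 1 ≤ m) :
    Anticommute (c n) (star (d m)) :=
  (h.2.2 n m hn hm).2

theorem symm (h : JointCAR c d) : JointCAR d c :=
  ⟨h.2.1, h.1, fun _ _ hn hm =>
    ⟨(h.anticommute hm hn).symm, by simpa using (h.anticommute_star hm hn).star.symm⟩⟩

end JointCAR

namespace SatisfiesCAR

variable {R : Type*} [Ring R] [StarRing R] {a : ℕ → R} {i j : ℕ}

theorem mul_star_add_star_mul (ha : SatisfiesCAR a) (hi : 1 ≤ i) (hj : 1 ≤ j) :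
    a i * star (a j) + star (a j) * a i = if i = j then 1 else 0 :=
  (ha i j hi hj).1

theorem star_mul_add_mul_star (ha : SatisfiesCAR a) (hi : 1 ≤ i) (hj : 1 ≤ j) :
    star (a i) * a j + a j * star (a i) = if i = j then 1 else 0 := by
  rw [add_comm, ha.mul_star_add_star_mul hj hi]
  simp only [eq_comm]

theorem anticommute (ha : SatisfiesCAR a) (hi : 1 ≤ i) (hj : 1 ≤ j) :
    Anticommute (a i) (a j) :=
  (ha i j hi hj).2

theorem anticommute_star (ha : SatisfiesCAR a) (hi : 1 ≤ i) (hj : 1 ≤ j) (hij : i ≠ j) :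
    Anticommute (a i) (star (a j)) := by
  have h := ha.mul_star_add_star_mul hi hj
  rwa [if_neg hij] at h

theorem isFermion (𝕜 : Type*) [DivisionRing 𝕜] [CharZero 𝕜] [Module 𝕜 R]
    (ha : SatisfiesCAR a) (hi : 1 ≤ i) : IsFermion (a i) := by
  refine ⟨?_, by simpa using ha.mul_star_add_star_mul hi hi⟩
  have h2 : (2 : 𝕜) • (a i * a i) = 0 := by rw [two_smul]; exact ha.anticommute hi hi
  exact (smul_eq_zero.1 h2).resolve_left two_ne_zero

theorem commute_one (ha : SatisfiesCAR a) (hi : 2 ≤ i) :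
    Commute (a 1 * star (a 1)) (a i) :=
  (ha.anticommute le_rfl (by omega)).commute_mul_left
    (ha.anticommute_star (by omega) le_rfl (by omega)).symm

theorem commute_one_star (ha : SatisfiesCAR a) (hi : 2 ≤ i) :
    Commute (a 1 * star (a 1)) (star (a i)) := by
  simpa using (ha.commute_one hi).star_star

end SatisfiesCAR

section Twist

variable {R : Type*} [Ring R]

/-- The relabelling `a_k ↦ (-1)^(⌊k/2⌋-1) a_k` that absorbs the signs of `mixedC`, `mixedD`;
natural subtraction makes the sign `+1` at `k = 1`. -/
def twist (a : ℕ → R) (k : ℕ) : R := (-1) ^ (k / 2 - 1) * a k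

theorem twist_one (a : ℕ → R) : twist a 1 = a 1 := by simp [twist]

theorem twist_twist (a : ℕ → R) : twist (twist a) = a := by
  funext k
  rw [twist, twist, ← mul_assoc, ← pow_add, Even.neg_one_pow ⟨_, rfl⟩, one_mul]

theorem star_twist [StarRing R] (a : ℕ → R) (k : ℕ) :
    star (twist a k) = (-1) ^ (k / 2 - 1) * star (a k) := by
  rw [twist, star_mul, star_pow, star_neg, star_one, ((Commute.neg_one_left _).pow_left _).eq]

theorem satisfiesCAR_twist [StarRing R] {a : ℕ → R} (ha : SatisfiesCAR a) :
    SatisfiesCAR (twist a) := by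
  have hsign : ∀ (i j : ℕ) (x y : R),
      (-1) ^ i * x * ((-1) ^ j * y) = (-1) ^ (i + j) * (x * y) := fun i j x y => by
    rw [((Commute.neg_one_left x).pow_left j).symm.mul_mul_mul_comm, pow_add]
  intro n m hn hm
  simp only [star_twist]
  simp only [twist, hsign]
  rw [add_comm (m / 2 - 1), ← mul_add, ← mul_add, ha.mul_star_add_star_mul hn hm,
    (ha.anticommute hn hm).eq, mul_zero]
  refine ⟨?_, rfl⟩
  split_ifs with h
  · rw [h, Even.neg_one_pow ⟨_, rfl⟩, mul_one]
  · rw [mul_zero]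

theorem Subalgebra.twist_mem {S : Type*} [CommRing S] [StarRing R] [Algebra S R]
    {A : Subalgebra S R} {a : ℕ → R} {n : ℕ} (h : a n ∈ A ∧ star (a n) ∈ A) :
    twist a n ∈ A ∧ star (twist a n) ∈ A := by
  have hs : ((-1) ^ (n / 2 - 1) : R) ∈ A := pow_mem (neg_mem (one_mem A)) _
  exact ⟨mul_mem hs h.1, star_twist a n ▸ mul_mem hs h.2⟩

end Twist

section MixedFermions

variable {R : Type*} [Ring R] [StarRing R] {b : ℕ → R} {n m : ℕ}

def mixC (b : ℕ → R) (n : ℕ) : R := mix (b 1) (star (b (2 * n + 1))) (b (2 * n + 1))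

def mixD (b : ℕ → R) (n : ℕ) : R := mix (b 1) (b (2 * n)) (-star (b (2 * n)))

theorem mix_neg_one_pow_mul (α u v : R) (k : ℕ) :
    mix α ((-1) ^ k * u) ((-1) ^ k * v) = (-1) ^ k * mix α u v := by
  simp only [mix, mul_add, ((Commute.neg_one_left _).pow_left k).symm.left_comm]

theorem mixedC_eq_mixC (a : ℕ → R) : mixedC a = mixC (twist a) := by
  funext n
  have hk : (2 * n + 1) / 2 - 1 = n - 1 := by omega
  rw [mixC, star_twist, twist_one, twist, hk, mix_neg_one_pow_mul, mixedC, mix]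

theorem mixedD_eq_mixD (a : ℕ → R) : mixedD a = mixD (twist a) := by
  funext n
  have hk : 2 * n / 2 - 1 = n - 1 := by omega
  rw [mixD, star_twist, twist_one, twist, hk, ← mul_neg, mix_neg_one_pow_mul, mixedD, mix,
    mul_neg, sub_eq_add_neg]

namespace SatisfiesCAR

theorem star_mixC (hb : SatisfiesCAR b) (hα : IsFermion (b 1)) (hn : 1 ≤ n) :
    star (mixC b n) = mix (b 1) (b (2 * n + 1)) (star (b (2 * n + 1))) := by
  rw [mixC, hα.star_mix (hb.commute_one_star (by omega)) (hb.commute_one (by omega)), star_star]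

theorem star_mixD (hb : SatisfiesCAR b) (hα : IsFermion (b 1)) (hn : 1 ≤ n) :
    star (mixD b n) = mix (b 1) (star (b (2 * n))) (-b (2 * n)) := by
  rw [mixD, hα.star_mix (hb.commute_one (by omega)) (hb.commute_one_star (by omega)).neg_right,
    star_neg, star_star]

theorem satisfiesCAR_mixC (hb : SatisfiesCAR b) (hα : IsFermion (b 1)) :
    SatisfiesCAR (mixC b) := by
  intro n m hn hm
  have hP := fun k (hk : 1 ≤ k) =>
    And.intro (hb.commute_one (i := 2 * k + 1) (by omega))
      (hb.commute_one_star (i := 2 * k + 1) (by omega))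
  refine ⟨?_, ?_⟩
  · rw [hb.star_mixC hα hm, mixC,
      hα.mix_anticomm (hP n hn).2 (hP n hn).1 (hP m hm).1 (hP m hm).2,
      hb.star_mul_add_mul_star (by omega) (by omega),
      hb.mul_star_add_star_mul (by omega) (by omega), hα.mix_self]
    simp
  · exact hα.anticommute_mix (hP n hn).2 (hP n hn).1 (hP m hm).2 (hP m hm).1
      (hb.anticommute (by omega) (by omega)).star (hb.anticommute (by omega) (by omega))

theorem satisfiesCAR_mixD (hb : SatisfiesCAR b) (hα : IsFermion (b 1)) :
    SatisfiesCAR (mixD b) := by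
  intro n m hn hm
  have hP := fun k (hk : 1 ≤ k) =>
    And.intro (hb.commute_one (i := 2 * k) (by omega)) (hb.commute_one_star (i := 2 * k) (by omega))
  refine ⟨?_, ?_⟩
  · rw [hb.star_mixD hα hm, mixD,
      hα.mix_anticomm (hP n hn).1 (hP n hn).2.neg_right (hP m hm).2 (hP m hm).1.neg_right,
      neg_mul_neg, neg_mul_neg, hb.star_mul_add_mul_star (by omega) (by omega),
      hb.mul_star_add_star_mul (by omega) (by omega), hα.mix_self]
    simp
  · exact hα.anticommute_mix (hP n hn).1 (hP n hn).2.neg_right (hP m hm).1 (hP m hm).2.neg_right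
      (hb.anticommute (by omega) (by omega))
      (hb.anticommute (by omega) (by omega)).star.neg_left.neg_right

theorem jointCAR_mixC_mixD (hb : SatisfiesCAR b) (hα : IsFermion (b 1)) :
    JointCAR (mixC b) (mixD b) := by
  refine ⟨hb.satisfiesCAR_mixC hα, hb.satisfiesCAR_mixD hα, fun n m hn hm => ⟨?_, ?_⟩⟩
  · rw [mixC, mixD]
    exact hα.anticommute_mix (hb.commute_one_star (by omega)) (hb.commute_one (by omega))
      (hb.commute_one (by omega)) (hb.commute_one_star (by omega)).neg_right
      (hb.anticommute_star (by omega) (by omega) (by omega)).symm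
      (hb.anticommute_star (by omega) (by omega) (by omega)).neg_right
  · rw [mixC, hb.star_mixD hα hm]
    exact hα.anticommute_mix (hb.commute_one_star (by omega)) (hb.commute_one (by omega))
      (hb.commute_one_star (by omega)) (hb.commute_one (by omega)).neg_right
      (hb.anticommute (by omega) (by omega)).star (hb.anticommute (by omega) (by omega)).neg_right

theorem mix_star_mixC_mixC (hb : SatisfiesCAR b) (hα : IsFermion (b 1)) (hn : 1 ≤ n) :
    mix (b 1) (star (mixC b n)) (mixC b n) = b (2 * n + 1) := by
  rw [hb.star_mixC hα hn, mixC, hα.mix_mix, hα.mix_self]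

theorem mix_mixC_star_mixC (hb : SatisfiesCAR b) (hα : IsFermion (b 1)) (hn : 1 ≤ n) :
    mix (b 1) (mixC b n) (star (mixC b n)) = star (b (2 * n + 1)) := by
  rw [hb.star_mixC hα hn, mixC, hα.mix_mix, hα.mix_self]

theorem mix_mixD_neg_star_mixD (hb : SatisfiesCAR b) (hα : IsFermion (b 1)) (hn : 1 ≤ n) :
    mix (b 1) (mixD b n) (-star (mixD b n)) = b (2 * n) := by
  rw [hb.star_mixD hα hn, neg_mix, neg_neg, mixD, hα.mix_mix, hα.mix_self]

theorem mix_star_mixD_neg_mixD (hb : SatisfiesCAR b) (hα : IsFermion (b 1)) (hn : 1 ≤ n) :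
    mix (b 1) (star (mixD b n)) (-mixD b n) = star (b (2 * n)) := by
  rw [hb.star_mixD hα hn, mixD, neg_mix, neg_neg, hα.mix_mix, hα.mix_self]

end SatisfiesCAR

def ConjugatesToAdjoint (z : R) (c d : ℕ → R) : Prop :=
  ∀ n, 1 ≤ n → SemiconjBy z (c n) (-star (c n)) ∧ SemiconjBy z (star (c n)) (-c n) ∧
    SemiconjBy z (d n) (star (d n)) ∧ SemiconjBy z (star (d n)) (d n)

theorem conjugatesToAdjoint_star {z : R} {c d : ℕ → R} (h : ConjugatesToAdjoint z c d) :
    ConjugatesToAdjoint (star z) c d := by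
  intro n hn
  obtain ⟨h1, h2, h3, h4⟩ := h n hn
  exact ⟨by simpa using h1.star_star_star.neg_right, by simpa using h2.star_star_star.neg_right,
    by simpa using h3.star_star_star, by simpa using h4.star_star_star⟩

theorem SatisfiesCAR.conjugatesToAdjoint_one (hb : SatisfiesCAR b) (hα : IsFermion (b 1)) :
    ConjugatesToAdjoint (b 1) (mixC b) (mixD b) := by
  intro n hn
  have hx := hb.commute_one (i := 2 * n + 1) (by omega)
  have hx' := hb.commute_one_star (i := 2 * n + 1) (by omega)
  have hy := hb.commute_one (i := 2 * n) (by omega)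
  have hy' := hb.commute_one_star (i := 2 * n) (by omega)
  have ax := hb.anticommute (i := 1) (j := 2 * n + 1) le_rfl (by omega)
  have ax' := hb.anticommute_star (i := 1) (j := 2 * n + 1) le_rfl (by omega) (by omega)
  have ay := hb.anticommute (i := 1) (j := 2 * n) le_rfl (by omega)
  have ay' := hb.anticommute_star (i := 1) (j := 2 * n) le_rfl (by omega) (by omega)
  refine ⟨?_, ?_, ?_, ?_⟩
  · rw [hb.star_mixC hα hn, neg_mix, mixC]
    exact hα.semiconjBy_mix _ ax hx'.neg_right
  · rw [hb.star_mixC hα hn, mixC, neg_mix]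
    exact hα.semiconjBy_mix _ ax' hx.neg_right
  · rw [hb.star_mixD hα hn, mixD]
    simpa only [neg_neg] using hα.semiconjBy_mix _ ay'.neg_right hy.neg_right
  · rw [hb.star_mixD hα hn, mixD]
    simpa only [neg_neg] using hα.semiconjBy_mix _ ay.neg_right hy'.neg_right

end MixedFermions

theorem Subalgebra.list_prod_map_mem {R A ι : Type*} [CommSemiring R] [Semiring A] [Algebra R A]
    {S : Subalgebra R A} {f : ι → A} {l : List ι} (h : ∀ i ∈ l, f i ∈ S) : (l.map f).prod ∈ S :=
  Subalgebra.list_prod_mem _ (List.forall_mem_map.2 h)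

namespace Submodule

section Stabilizer

variable {𝕜 E : Type*} [NontriviallyNormedField 𝕜] [NormedAddCommGroup E] [NormedSpace 𝕜 E]

def stabilizerAlgebra (N : Submodule 𝕜 E) : Subalgebra 𝕜 (E →L[𝕜] E) where
  carrier := {T | N ≤ N.comap (T : E →ₗ[𝕜] E)}
  mul_mem' hS hT _ hx := hS (hT hx)
  add_mem' hS hT _ hx := N.add_mem (hS hx) (hT hx)
  algebraMap_mem' r x hx := by
    simpa [Algebra.algebraMap_eq_smul_one] using N.smul_mem r hx

variable {N : Submodule 𝕜 E} {T : E →L[𝕜] E}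

theorem mem_stabilizerAlgebra : T ∈ N.stabilizerAlgebra ↔ N ≤ N.comap (T : E →ₗ[𝕜] E) :=
  Iff.rfl

theorem apply_mem_of_mem_stabilizerAlgebra (hT : T ∈ N.stabilizerAlgebra) {x : E} (hx : x ∈ N) :
    T x ∈ N :=
  mem_stabilizerAlgebra.1 hT hx

theorem stabilizerAlgebra_bot : (⊥ : Submodule 𝕜 E).stabilizerAlgebra = ⊤ :=
  eq_top_iff.2 fun _ _ => mem_stabilizerAlgebra.2 bot_le

theorem stabilizerAlgebra_le_topologicalClosure :
    N.stabilizerAlgebra ≤ N.topologicalClosure.stabilizerAlgebra := fun T hT =>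
  mem_stabilizerAlgebra.2 <| N.topologicalClosure_minimal
    (le_trans (mem_stabilizerAlgebra.1 hT) (comap_mono N.le_topologicalClosure))
    (N.isClosed_topologicalClosure.preimage T.continuous)

theorem stabilizerAlgebra_inf_le_sup (N₁ N₂ : Submodule 𝕜 E) :
    N₁.stabilizerAlgebra ⊓ N₂.stabilizerAlgebra ≤ (N₁ ⊔ N₂).stabilizerAlgebra := fun _ hT =>
  mem_stabilizerAlgebra.2 <|
    sup_le (le_trans (mem_stabilizerAlgebra.1 hT.1) (comap_mono le_sup_left))
      (le_trans (mem_stabilizerAlgebra.1 hT.2) (comap_mono le_sup_right))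

theorem apply_list_prod_mem {z : E →L[𝕜] E} {e : ℕ → E →L[𝕜] E} {x : E} (hx : x ∈ N)
    (hzx : z x ∈ N) : ∀ L : List ℕ,
      (∀ l ∈ L, e l ∈ N.stabilizerAlgebra ∧ z * e l + e l * z ∈ N.stabilizerAlgebra) →
        z ((L.map e).prod x) ∈ N
  | [], _ => by simpa using hzx
  | l :: L, h => by
    have hL : ∀ j ∈ L, e j ∈ N.stabilizerAlgebra ∧ z * e j + e j * z ∈ N.stabilizerAlgebra :=
      fun j hj => h j (List.mem_cons_of_mem l hj)
    have hy : (L.map e).prod x ∈ N := apply_mem_of_mem_stabilizerAlgebra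
      (Subalgebra.list_prod_map_mem fun j hj => (hL j hj).1) hx
    have hl := h l List.mem_cons_self
    have key : ∀ y, z (e l y) = (z * e l + e l * z) y - e l (z y) := fun y => by
      simp only [add_apply, mul_apply_eq_comp, add_sub_cancel_right]
    rw [List.map_cons, List.prod_cons, mul_apply_eq_comp, key]
    exact sub_mem (apply_mem_of_mem_stabilizerAlgebra hl.2 hy)
      (apply_mem_of_mem_stabilizerAlgebra hl.1 (apply_list_prod_mem hx hzx L hL))

end Stabilizer

variable {𝕜 H : Type*} [RCLike 𝕜] [NormedAddCommGroup H] [InnerProductSpace 𝕜 H]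

theorem starAlgebra_adjoin_le_stabilizerAlgebra [CompleteSpace H] {N : Submodule 𝕜 H}
    {s : Set (H →L[𝕜] H)} (h : ∀ T ∈ s, T ∈ N.stabilizerAlgebra ∧ star T ∈ N.stabilizerAlgebra) :
    (StarAlgebra.adjoin 𝕜 s).toSubalgebra ≤ N.stabilizerAlgebra := by
  rw [StarAlgebra.adjoin_toSubalgebra, Algebra.adjoin_le_iff]
  rintro T (hT | hT)
  · exact (h T hT).1
  · simpa using (h (star T) hT).2

theorem sup_eq_top_of_isOrtho [CompleteSpace H] {K L : Submodule 𝕜 H}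
    [K.HasOrthogonalProjection] [L.HasOrthogonalProjection] (hKL : K ⟂ L)
    (hdense : (K ⊔ L).topologicalClosure = ⊤) :
    K ⊔ L = ⊤ := by
  have hL : Kᗮ = L := by
    have h := sup_orthogonal_inf_of_hasOrthogonalProjection hKL.ge
    rwa [inf_orthogonal, sup_comm L K, topologicalClosure_eq_top_iff.1 hdense, sup_bot_eq,
      eq_comm] at h
  rw [← hL, sup_orthogonal_of_hasOrthogonalProjection]

end Submodule

theorem inner_eq_zero_of_apply_eq_zero {𝕜 H : Type*} [RCLike 𝕜] [NormedAddCommGroup H]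
    [InnerProductSpace 𝕜 H] [CompleteSpace H] {α : H →L[𝕜] H}
    (hα : α * star α + star α * α = 1) {x y : H} (hx : α x = 0) (hy : star α y = 0) :
    inner 𝕜 x y = 0 := by
  have hx' : α (star α x) = x := by simpa [hx] using congrArg (· x) hα
  rw [← hx', ← ContinuousLinearMap.adjoint_inner_right, ← ContinuousLinearMap.star_eq_adjoint,
    hy, inner_zero_right]

section Wedge

open Submodule

variable {H : Type*} [NormedAddCommGroup H] [InnerProductSpace ℂ H] [CompleteSpace H]
  {c d : ℕ → H →L[ℂ] H} {v : H} {n : ℕ}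

instance (c d : ℕ → H →L[ℂ] H) (v : H) : (wedgeSpace c d v).HasOrthogonalProjection := by
  unfold wedgeSpace; infer_instance

def wedgeWord (c d : ℕ → H →L[ℂ] H) (K L : List ℕ) : H →L[ℂ] H :=
  (K.map c).prod * (L.map fun l => star (d l)).prod

def wedgeSpan (c d : ℕ → H →L[ℂ] H) (v : H) : Submodule ℂ H :=
  span ℂ {x | ∃ K L : List ℕ, (∀ k ∈ K, 1 ≤ k) ∧ (∀ l ∈ L, 1 ≤ l) ∧ x = wedgeWord c d K L v}

theorem isClosed_wedgeSpace : IsClosed (wedgeSpace c d v : Set H) :=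
  isClosed_topologicalClosure _

theorem wedgeWord_mem_wedgeSpan {K L : List ℕ} (hK : ∀ k ∈ K, 1 ≤ k) (hL : ∀ l ∈ L, 1 ≤ l) :
    wedgeWord c d K L v ∈ wedgeSpan c d v :=
  subset_span ⟨K, L, hK, hL, rfl⟩

theorem mem_wedgeSpan_self : v ∈ wedgeSpan c d v := by
  simpa [wedgeWord] using wedgeWord_mem_wedgeSpan (c := c) (d := d) (v := v) (K := []) (L := [])
    (by simp) (by simp)

theorem mem_wedgeSpace_self : v ∈ wedgeSpace c d v :=
  (wedgeSpan c d v).le_topologicalClosure mem_wedgeSpan_self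

theorem wedgeSpan_le {N : Submodule ℂ H}
    (h : ∀ K L : List ℕ, (∀ k ∈ K, 1 ≤ k) → (∀ l ∈ L, 1 ≤ l) → wedgeWord c d K L v ∈ N) :
    wedgeSpan c d v ≤ N :=
  span_le.2 fun _ ⟨K, L, hK, hL, hx⟩ => hx ▸ h K L hK hL

theorem wedgeSpace_le {M : Submodule ℂ H} (hM : IsClosed (M : Set H))
    (h : ∀ K L : List ℕ, (∀ k ∈ K, 1 ≤ k) → (∀ l ∈ L, 1 ≤ l) → wedgeWord c d K L v ∈ M) :
    wedgeSpace c d v ≤ M :=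
  (wedgeSpan c d v).topologicalClosure_minimal (wedgeSpan_le h) hM

theorem mem_stabilizerAlgebra_wedgeSpan {T : H →L[ℂ] H}
    (h : ∀ K L : List ℕ, (∀ k ∈ K, 1 ≤ k) → (∀ l ∈ L, 1 ≤ l) →
      T (wedgeWord c d K L v) ∈ wedgeSpan c d v) :
    T ∈ (wedgeSpan c d v).stabilizerAlgebra :=
  mem_stabilizerAlgebra.2 (wedgeSpan_le h)

theorem left_mem_stabilizerAlgebra_wedgeSpan (hn : 1 ≤ n) :
    c n ∈ (wedgeSpan c d v).stabilizerAlgebra :=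
  mem_stabilizerAlgebra_wedgeSpan fun K L hK hL => by
    simpa only [wedgeWord, List.map_cons, List.prod_cons, mul_apply_eq_comp] using
      wedgeWord_mem_wedgeSpan (c := c) (d := d) (v := v) (List.forall_mem_cons.2 ⟨hn, hK⟩) hL

namespace JointCAR

theorem star_right_mem_stabilizerAlgebra_wedgeSpan (hcd : JointCAR c d) (hn : 1 ≤ n) :
    star (d n) ∈ (wedgeSpan c d v).stabilizerAlgebra :=
  mem_stabilizerAlgebra_wedgeSpan fun K L hK hL => by
    have hs : SemiconjBy (star (d n)) (K.map c).prod (K.map fun k => -c k).prod :=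
      SemiconjBy.list_prod_map K fun k hk => (hcd.anticommute_star (hK k hk) hn).symm.semiconjBy
    have hword : star (d n) (wedgeWord c d K L v) =
        (K.map fun k => -c k).prod (wedgeWord c d [] (n :: L) v) := by
      rw [wedgeWord, wedgeWord, ← mul_apply_eq_comp, ← mul_assoc, hs.eq, List.map_nil,
        List.prod_nil, one_mul, List.map_cons, List.prod_cons, mul_assoc, mul_apply_eq_comp]
    rw [hword]
    exact apply_mem_of_mem_stabilizerAlgebra
      (Subalgebra.list_prod_map_mem fun k hk =>
        neg_mem (left_mem_stabilizerAlgebra_wedgeSpan (hK k hk)))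
      (wedgeWord_mem_wedgeSpan (by simp) (List.forall_mem_cons.2 ⟨hn, hL⟩))

theorem star_left_mem_stabilizerAlgebra_wedgeSpan (hcd : JointCAR c d) (hn : 1 ≤ n)
    (hv : star (c n) v = 0) : star (c n) ∈ (wedgeSpan c d v).stabilizerAlgebra :=
  mem_stabilizerAlgebra_wedgeSpan fun K L hK hL => by
    have hs : SemiconjBy (star (c n)) (L.map fun l => star (d l)).prod
        (L.map fun l => -star (d l)).prod :=
      SemiconjBy.list_prod_map L fun l hl => (hcd.anticommute hn (hL l hl)).star.semiconjBy
    have hx : (L.map fun l => star (d l)).prod v ∈ wedgeSpan c d v := by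
      simpa [wedgeWord] using wedgeWord_mem_wedgeSpan (c := c) (d := d) (v := v) (K := [])
        (by simp) hL
    have hzx : star (c n) ((L.map fun l => star (d l)).prod v) ∈ wedgeSpan c d v := by
      rw [← mul_apply_eq_comp, hs.eq, mul_apply_eq_comp, hv, map_zero]
      exact zero_mem _
    rw [wedgeWord, mul_apply_eq_comp]
    refine apply_list_prod_mem hx hzx K fun k hk =>
      ⟨left_mem_stabilizerAlgebra_wedgeSpan (hK k hk), ?_⟩
    rw [add_comm, hcd.1.mul_star_add_star_mul (hK k hk) hn]
    split_ifs
    exacts [one_mem _, zero_mem _]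

theorem right_mem_stabilizerAlgebra_wedgeSpan (hcd : JointCAR c d) (hn : 1 ≤ n)
    (hv : d n v = 0) : d n ∈ (wedgeSpan c d v).stabilizerAlgebra :=
  mem_stabilizerAlgebra_wedgeSpan fun K L hK hL => by
    have hs : SemiconjBy (d n) (K.map c).prod (K.map fun k => -c k).prod :=
      SemiconjBy.list_prod_map K fun k hk => (hcd.anticommute (hK k hk) hn).symm.semiconjBy
    have hzx : d n v ∈ wedgeSpan c d v := by rw [hv]; exact zero_mem _
    rw [wedgeWord, ← mul_apply_eq_comp, ← mul_assoc, hs.eq, mul_assoc, mul_apply_eq_comp,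
      mul_apply_eq_comp]
    refine apply_mem_of_mem_stabilizerAlgebra
      (Subalgebra.list_prod_map_mem fun k hk =>
        neg_mem (left_mem_stabilizerAlgebra_wedgeSpan (hK k hk)))
      (apply_list_prod_mem mem_wedgeSpan_self hzx L fun l hl =>
        ⟨hcd.star_right_mem_stabilizerAlgebra_wedgeSpan (hL l hl), ?_⟩)
    rw [hcd.2.1.mul_star_add_star_mul hn (hL l hl)]
    split_ifs
    exacts [one_mem _, zero_mem _]

theorem mem_stabilizerAlgebra_wedgeSpace (hcd : JointCAR c d)
    (hcv : ∀ n, 1 ≤ n → star (c n) v = 0) (hdv : ∀ n, 1 ≤ n → d n v = 0) (hn : 1 ≤ n) :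
    c n ∈ (wedgeSpace c d v).stabilizerAlgebra ∧ d n ∈ (wedgeSpace c d v).stabilizerAlgebra ∧
      star (c n) ∈ (wedgeSpace c d v).stabilizerAlgebra ∧
      star (d n) ∈ (wedgeSpace c d v).stabilizerAlgebra :=
  ⟨stabilizerAlgebra_le_topologicalClosure (left_mem_stabilizerAlgebra_wedgeSpan hn),
    stabilizerAlgebra_le_topologicalClosure
      (hcd.right_mem_stabilizerAlgebra_wedgeSpan hn (hdv n hn)),
    stabilizerAlgebra_le_topologicalClosure
      (hcd.star_left_mem_stabilizerAlgebra_wedgeSpan hn (hcv n hn)),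
    stabilizerAlgebra_le_topologicalClosure (hcd.star_right_mem_stabilizerAlgebra_wedgeSpan hn)⟩

end JointCAR

theorem wedgeSpace_le_comap_of_semiconjBy {z : H →L[ℂ] H} {c' e : ℕ → H →L[ℂ] H}
    {M : Submodule ℂ H} (hM : IsClosed (M : Set H))
    (hc : ∀ k, 1 ≤ k → SemiconjBy z (c k) (c' k))
    (hd : ∀ l, 1 ≤ l → SemiconjBy z (star (d l)) (e l))
    (hc' : ∀ k, 1 ≤ k → c' k ∈ M.stabilizerAlgebra) (he : ∀ l, 1 ≤ l → e l ∈ M.stabilizerAlgebra)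
    (hv : z v ∈ M) : wedgeSpace c d v ≤ M.comap (z : H →ₗ[ℂ] H) :=
  wedgeSpace_le (hM.preimage z.continuous) fun K L hK hL => by
    have hs : SemiconjBy z (wedgeWord c d K L) ((K.map c').prod * (L.map e).prod) :=
      (SemiconjBy.list_prod_map K fun k hk => hc k (hK k hk)).mul_right
        (SemiconjBy.list_prod_map L fun l hl => hd l (hL l hl))
    change z (wedgeWord c d K L v) ∈ M
    rw [← mul_apply_eq_comp, hs.eq, mul_apply_eq_comp]
    exact apply_mem_of_mem_stabilizerAlgebra (Subalgebra.mul_mem _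
      (Subalgebra.list_prod_map_mem fun k hk => hc' k (hK k hk))
      (Subalgebra.list_prod_map_mem fun l hl => he l (hL l hl)))
      hv

end Wedge

section Fock

open Submodule

variable {H : Type*} [NormedAddCommGroup H] [InnerProductSpace ℂ H] [CompleteSpace H]
  {b : ℕ → H →L[ℂ] H} {Ω : H} {n : ℕ}

theorem IsFermion.mix_apply_eq_zero {α u v : H →L[ℂ] H} (hα : IsFermion α)
    (hv : Commute (α * star α) v) (hu : u Ω = 0) (hαΩ : α Ω = 0) : mix α u v Ω = 0 := by
  rw [mix, add_apply, mul_apply_eq_comp, hu, map_zero, zero_add,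
    (hα.commute_star_mul_self hv).eq, mul_apply_eq_comp, mul_apply_eq_comp, hαΩ, map_zero,
    map_zero]

theorem ConjugatesToAdjoint.wedgeSpace_le_comap {z : H →L[ℂ] H} {c d : ℕ → H →L[ℂ] H}
    (h : ConjugatesToAdjoint z c d) {M : Submodule ℂ H} (hM : IsClosed (M : Set H))
    (hcd : ∀ n, 1 ≤ n → star (c n) ∈ M.stabilizerAlgebra ∧ d n ∈ M.stabilizerAlgebra) {v : H}
    (hv : z v ∈ M) : wedgeSpace c d v ≤ M.comap (z : H →ₗ[ℂ] H) :=
  wedgeSpace_le_comap_of_semiconjBy hM (fun k hk => (h k hk).1) (fun l hl => (h l hl).2.2.2)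
    (fun k hk => neg_mem (hcd k hk).1) (fun l hl => (hcd l hl).2) hv

theorem ConjugatesToAdjoint.dualWedgeSpace_le_comap {z : H →L[ℂ] H} {c d : ℕ → H →L[ℂ] H}
    (h : ConjugatesToAdjoint z c d) {M : Submodule ℂ H} (hM : IsClosed (M : Set H))
    (hcd : ∀ n, 1 ≤ n → c n ∈ M.stabilizerAlgebra ∧ star (d n) ∈ M.stabilizerAlgebra) {v : H}
    (hv : z v ∈ M) : wedgeSpace d c v ≤ M.comap (z : H →ₗ[ℂ] H) :=
  wedgeSpace_le_comap_of_semiconjBy hM (fun k hk => (h k hk).2.2.1) (fun l hl => (h l hl).2.1)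
    (fun k hk => (hcd k hk).2) (fun l hl => neg_mem (hcd l hl).1) hv

namespace SatisfiesCAR

theorem star_mixC_apply_vacuum (hb : SatisfiesCAR b) (hvac : ∀ n, 1 ≤ n → b n Ω = 0)
    (hn : 1 ≤ n) : star (mixC b n) Ω = 0 := by
  have hα := hb.isFermion ℂ le_rfl
  rw [hb.star_mixC hα hn]
  exact hα.mix_apply_eq_zero (hb.commute_one_star (by omega)) (hvac _ (by omega)) (hvac 1 le_rfl)

theorem mixD_apply_vacuum (hb : SatisfiesCAR b) (hvac : ∀ n, 1 ≤ n → b n Ω = 0) (hn : 1 ≤ n) :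
    mixD b n Ω = 0 :=
  (hb.isFermion ℂ le_rfl).mix_apply_eq_zero (hb.commute_one_star (by omega)).neg_right
    (hvac _ (by omega)) (hvac 1 le_rfl)

theorem mixC_apply_dualVacuum (hb : SatisfiesCAR b) (hvac : ∀ n, 1 ≤ n → b n Ω = 0)
    (hn : 1 ≤ n) : mixC b n (star (b 1) Ω) = 0 := by
  have h := congrArg (· Ω)
    (conjugatesToAdjoint_star (hb.conjugatesToAdjoint_one (hb.isFermion ℂ le_rfl)) n hn).2.1.eq
  simpa [mul_apply_eq_comp, hb.star_mixC_apply_vacuum hvac hn, eq_comm] using h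

theorem star_mixD_apply_dualVacuum (hb : SatisfiesCAR b) (hvac : ∀ n, 1 ≤ n → b n Ω = 0)
    (hn : 1 ≤ n) : star (mixD b n) (star (b 1) Ω) = 0 := by
  have h := congrArg (· Ω)
    (conjugatesToAdjoint_star (hb.conjugatesToAdjoint_one (hb.isFermion ℂ le_rfl)) n hn).2.2.1.eq
  simpa [mul_apply_eq_comp, hb.mixD_apply_vacuum hvac hn, eq_comm] using h

theorem mem_stabilizerAlgebra_wedgeSpace (hb : SatisfiesCAR b)
    (hvac : ∀ n, 1 ≤ n → b n Ω = 0) (hn : 1 ≤ n) :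
    mixC b n ∈ (wedgeSpace (mixC b) (mixD b) Ω).stabilizerAlgebra ∧
      mixD b n ∈ (wedgeSpace (mixC b) (mixD b) Ω).stabilizerAlgebra ∧
      star (mixC b n) ∈ (wedgeSpace (mixC b) (mixD b) Ω).stabilizerAlgebra ∧
      star (mixD b n) ∈ (wedgeSpace (mixC b) (mixD b) Ω).stabilizerAlgebra :=
  (hb.jointCAR_mixC_mixD (hb.isFermion ℂ le_rfl)).mem_stabilizerAlgebra_wedgeSpace
    (fun _ hk => hb.star_mixC_apply_vacuum hvac hk) (fun _ hk => hb.mixD_apply_vacuum hvac hk) hn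

theorem mem_stabilizerAlgebra_dualWedgeSpace (hb : SatisfiesCAR b)
    (hvac : ∀ n, 1 ≤ n → b n Ω = 0) (hn : 1 ≤ n) :
    mixD b n ∈ (wedgeSpace (mixD b) (mixC b) (star (b 1) Ω)).stabilizerAlgebra ∧
      mixC b n ∈ (wedgeSpace (mixD b) (mixC b) (star (b 1) Ω)).stabilizerAlgebra ∧
      star (mixD b n) ∈ (wedgeSpace (mixD b) (mixC b) (star (b 1) Ω)).stabilizerAlgebra ∧
      star (mixC b n) ∈ (wedgeSpace (mixD b) (mixC b) (star (b 1) Ω)).stabilizerAlgebra :=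
  (hb.jointCAR_mixC_mixD (hb.isFermion ℂ le_rfl)).symm.mem_stabilizerAlgebra_wedgeSpace
    (fun _ hk => hb.star_mixD_apply_dualVacuum hvac hk)
    (fun _ hk => hb.mixC_apply_dualVacuum hvac hk) hn

theorem isOrtho_wedgeSpace (hb : SatisfiesCAR b) (hvac : ∀ n, 1 ≤ n → b n Ω = 0) :
    wedgeSpace (mixC b) (mixD b) Ω ⟂ wedgeSpace (mixD b) (mixC b) (star (b 1) Ω) := by
  have hα := hb.isFermion ℂ le_rfl
  have hconj := hb.conjugatesToAdjoint_one hα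
  have hbot : IsClosed ((⊥ : Submodule ℂ H) : Set H) := by simp
  have htriv : ∀ T : H →L[ℂ] H, T ∈ (⊥ : Submodule ℂ H).stabilizerAlgebra := by
    simp [stabilizerAlgebra_bot]
  have hV := hconj.wedgeSpace_le_comap hbot (fun _ _ => ⟨htriv _, htriv _⟩) (v := Ω)
    (by simp [hvac 1 le_rfl])
  have hV' := (conjugatesToAdjoint_star hconj).dualWedgeSpace_le_comap hbot
    (fun _ _ => ⟨htriv _, htriv _⟩) (v := star (b 1) Ω)
    (by simp [← mul_apply_eq_comp, (isFermion_star hα).1])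
  rw [isOrtho_iff_inner_eq]
  exact fun x hx y hy => inner_eq_zero_of_apply_eq_zero hα.2 (by simpa using hV hx)
    (by simpa using hV' hy)

theorem one_mem_stabilizerAlgebra_sup (hb : SatisfiesCAR b) (hvac : ∀ n, 1 ≤ n → b n Ω = 0) :
    b 1 ∈ (wedgeSpace (mixC b) (mixD b) Ω ⊔
        wedgeSpace (mixD b) (mixC b) (star (b 1) Ω)).stabilizerAlgebra ∧
      star (b 1) ∈ (wedgeSpace (mixC b) (mixD b) Ω ⊔
        wedgeSpace (mixD b) (mixC b) (star (b 1) Ω)).stabilizerAlgebra := by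
  have hα := hb.isFermion ℂ le_rfl
  have hconj := hb.conjugatesToAdjoint_one hα
  have hV := fun n (hn : 1 ≤ n) => hb.mem_stabilizerAlgebra_wedgeSpace hvac hn
  have hV' := fun n (hn : 1 ≤ n) => hb.mem_stabilizerAlgebra_dualWedgeSpace hvac hn
  have hΩ : b 1 (star (b 1) Ω) = Ω := by
    simpa [mul_apply_eq_comp, hvac 1 le_rfl] using congrArg (· Ω) hα.2
  have hαV := hconj.wedgeSpace_le_comap isClosed_wedgeSpace
    (fun n hn => ⟨(hV n hn).2.2.1, (hV n hn).2.1⟩) (v := Ω) (by simp [hvac 1 le_rfl])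
  have hαV' := hconj.dualWedgeSpace_le_comap isClosed_wedgeSpace
    (fun n hn => ⟨(hV n hn).1, (hV n hn).2.2.2⟩) (v := star (b 1) Ω)
    (by rw [hΩ]; exact mem_wedgeSpace_self)
  have hα'V := (conjugatesToAdjoint_star hconj).wedgeSpace_le_comap isClosed_wedgeSpace
    (fun n hn => ⟨(hV' n hn).2.2.2, (hV' n hn).1⟩) (v := Ω) mem_wedgeSpace_self
  have hα'V' := (conjugatesToAdjoint_star hconj).dualWedgeSpace_le_comap isClosed_wedgeSpace
    (fun n hn => ⟨(hV' n hn).2.1, (hV' n hn).2.2.1⟩) (v := star (b 1) Ω)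
    (by simp [← mul_apply_eq_comp, (isFermion_star hα).1])
  exact ⟨mem_stabilizerAlgebra.2 (sup_le (le_trans hαV (comap_mono le_sup_left))
      (le_trans hαV' (comap_mono le_sup_left))),
    mem_stabilizerAlgebra.2 (sup_le (le_trans hα'V (comap_mono le_sup_right))
      (le_trans hα'V' (comap_mono le_sup_right)))⟩

theorem mem_stabilizerAlgebra_sup (hb : SatisfiesCAR b) (hvac : ∀ n, 1 ≤ n → b n Ω = 0)
    (hn : 1 ≤ n) :
    b n ∈ (wedgeSpace (mixC b) (mixD b) Ω ⊔
        wedgeSpace (mixD b) (mixC b) (star (b 1) Ω)).stabilizerAlgebra ∧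
      star (b n) ∈ (wedgeSpace (mixC b) (mixD b) Ω ⊔
        wedgeSpace (mixD b) (mixC b) (star (b 1) Ω)).stabilizerAlgebra := by
  have hα := hb.isFermion ℂ le_rfl
  obtain ⟨hαW, hα'W⟩ := hb.one_mem_stabilizerAlgebra_sup hvac
  have hW : ∀ T, T ∈ (wedgeSpace (mixC b) (mixD b) Ω).stabilizerAlgebra →
      T ∈ (wedgeSpace (mixD b) (mixC b) (star (b 1) Ω)).stabilizerAlgebra →
      T ∈ (wedgeSpace (mixC b) (mixD b) Ω ⊔
        wedgeSpace (mixD b) (mixC b) (star (b 1) Ω)).stabilizerAlgebra :=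
    fun _ h₁ h₂ => stabilizerAlgebra_inf_le_sup _ _ ⟨h₁, h₂⟩
  obtain ⟨m, rfl | rfl⟩ := Nat.even_or_odd' n
  · have hm : 1 ≤ m := by omega
    obtain ⟨-, hd, -, hd'⟩ := hb.mem_stabilizerAlgebra_wedgeSpace hvac hm
    obtain ⟨hd₂, -, hd₂', -⟩ := hb.mem_stabilizerAlgebra_dualWedgeSpace hvac hm
    rw [← hb.mix_star_mixD_neg_mixD hα hm, ← hb.mix_mixD_neg_star_mixD hα hm]
    exact ⟨Subalgebra.mix_mem hαW hα'W (hW _ hd hd₂) (neg_mem (hW _ hd' hd₂')),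
      Subalgebra.mix_mem hαW hα'W (hW _ hd' hd₂') (neg_mem (hW _ hd hd₂))⟩
  · rcases Nat.eq_zero_or_pos m with rfl | hm
    · exact ⟨hαW, hα'W⟩
    obtain ⟨hc, -, hc', -⟩ := hb.mem_stabilizerAlgebra_wedgeSpace hvac hm
    obtain ⟨-, hc₂, -, hc₂'⟩ := hb.mem_stabilizerAlgebra_dualWedgeSpace hvac hm
    rw [← hb.mix_mixC_star_mixC hα hm, ← hb.mix_star_mixC_mixC hα hm]
    exact ⟨Subalgebra.mix_mem hαW hα'W (hW _ hc' hc₂') (hW _ hc hc₂),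
      Subalgebra.mix_mem hαW hα'W (hW _ hc hc₂) (hW _ hc' hc₂')⟩

end SatisfiesCAR

end Fock

open Submodule in
theorem fock_decomposes_into_wedge_and_dual_wedge_general
    {H : Type*} [NormedAddCommGroup H] [InnerProductSpace ℂ H] [CompleteSpace H]
    (a : ℕ → H →L[ℂ] H) (ha : SatisfiesCAR a)
    (Ω : H) (hvac : ∀ n : ℕ, 1 ≤ n → a n Ω = 0)
    (hcyc : (Submodule.span ℂ {v : H | ∃ T ∈ StarAlgebra.adjoin ℂ
        {x : H →L[ℂ] H | ∃ n : ℕ, 1 ≤ n ∧ x = a n}, v = T Ω}).topologicalClosure = ⊤) :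
    -- `V ⊥ V^*`
    (∀ x ∈ wedgeSpace (mixedC a) (mixedD a) Ω,
      ∀ y ∈ wedgeSpace (mixedD a) (mixedC a) (star (a 1) Ω), (inner ℂ x y : ℂ) = 0)
    -- `V` is invariant under all `c_n, d_n, c_n^*, d_n^*`
    ∧ (∀ n : ℕ, 1 ≤ n → ∀ x ∈ wedgeSpace (mixedC a) (mixedD a) Ω,
        mixedC a n x ∈ wedgeSpace (mixedC a) (mixedD a) Ω
        ∧ mixedD a n x ∈ wedgeSpace (mixedC a) (mixedD a) Ω
        ∧ star (mixedC a n) x ∈ wedgeSpace (mixedC a) (mixedD a) Ω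
        ∧ star (mixedD a n) x ∈ wedgeSpace (mixedC a) (mixedD a) Ω)
    -- `V^*` is invariant under all `c_n, d_n, c_n^*, d_n^*`
    ∧ (∀ n : ℕ, 1 ≤ n → ∀ x ∈ wedgeSpace (mixedD a) (mixedC a) (star (a 1) Ω),
        mixedC a n x ∈ wedgeSpace (mixedD a) (mixedC a) (star (a 1) Ω)
        ∧ mixedD a n x ∈ wedgeSpace (mixedD a) (mixedC a) (star (a 1) Ω)
        ∧ star (mixedC a n) x ∈ wedgeSpace (mixedD a) (mixedC a) (star (a 1) Ω)
        ∧ star (mixedD a n) x ∈ wedgeSpace (mixedD a) (mixedC a) (star (a 1) Ω))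
    -- `H = V ⊕ V^*`
    ∧ wedgeSpace (mixedC a) (mixedD a) Ω
        ⊔ wedgeSpace (mixedD a) (mixedC a) (star (a 1) Ω) = ⊤ := by
  have hb := satisfiesCAR_twist ha
  have hvac' : ∀ n, 1 ≤ n → twist a n Ω = 0 := fun n hn => by
    rw [twist, mul_apply_eq_comp, hvac n hn, map_zero]
  rw [mixedC_eq_mixC, mixedD_eq_mixD, ← twist_one a]
  have hortho := hb.isOrtho_wedgeSpace hvac'
  refine ⟨fun x hx y hy => hortho.inner_eq hx hy, fun n hn x hx => ?_, fun n hn x hx => ?_, ?_⟩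
  · obtain ⟨hc, hd, hc', hd'⟩ := hb.mem_stabilizerAlgebra_wedgeSpace hvac' hn
    exact ⟨apply_mem_of_mem_stabilizerAlgebra hc hx, apply_mem_of_mem_stabilizerAlgebra hd hx,
      apply_mem_of_mem_stabilizerAlgebra hc' hx, apply_mem_of_mem_stabilizerAlgebra hd' hx⟩
  · obtain ⟨hd, hc, hd', hc'⟩ := hb.mem_stabilizerAlgebra_dualWedgeSpace hvac' hn
    exact ⟨apply_mem_of_mem_stabilizerAlgebra hc hx, apply_mem_of_mem_stabilizerAlgebra hd hx,
      apply_mem_of_mem_stabilizerAlgebra hc' hx, apply_mem_of_mem_stabilizerAlgebra hd' hx⟩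
  · refine sup_eq_top_of_isOrtho hortho (eq_top_iff.2 ?_)
    rw [← hcyc]
    refine topologicalClosure_mono (span_le.2 ?_)
    rintro _ ⟨T, hT, rfl⟩
    refine apply_mem_of_mem_stabilizerAlgebra (starAlgebra_adjoin_le_stabilizerAlgebra ?_ hT)
      (mem_sup_left mem_wedgeSpace_self)
    rintro _ ⟨n, hn, rfl⟩
    simpa only [twist_twist] using Subalgebra.twist_mem (hb.mem_stabilizerAlgebra_sup hvac' hn)

theorem fock_decomposes_into_wedge_and_dual_wedge
    {H : Type*} [NormedAddCommGroup H] [InnerProductSpace ℂ H] [CompleteSpace H]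
    (a : ℕ → H →L[ℂ] H) (ha : SatisfiesCAR a)
    (Ω : H) (hΩ : ‖Ω‖ = 1) (hvac : ∀ n : ℕ, 1 ≤ n → a n Ω = 0)
    (hcyc : (Submodule.span ℂ {v : H | ∃ T ∈ StarAlgebra.adjoin ℂ
        {x : H →L[ℂ] H | ∃ n : ℕ, 1 ≤ n ∧ x = a n}, v = T Ω}).topologicalClosure = ⊤) :
    -- `V ⊥ V^*`
    (∀ x ∈ wedgeSpace (mixedC a) (mixedD a) Ω,
      ∀ y ∈ wedgeSpace (mixedD a) (mixedC a) (star (a 1) Ω), (inner ℂ x y : ℂ) = 0)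
    -- `V` is invariant under all `c_n, d_n, c_n^*, d_n^*`
    ∧ (∀ n : ℕ, 1 ≤ n → ∀ x ∈ wedgeSpace (mixedC a) (mixedD a) Ω,
        mixedC a n x ∈ wedgeSpace (mixedC a) (mixedD a) Ω
        ∧ mixedD a n x ∈ wedgeSpace (mixedC a) (mixedD a) Ω
        ∧ star (mixedC a n) x ∈ wedgeSpace (mixedC a) (mixedD a) Ω
        ∧ star (mixedD a n) x ∈ wedgeSpace (mixedC a) (mixedD a) Ω)
    -- `V^*` is invariant under all `c_n, d_n, c_n^*, d_n^*`
    ∧ (∀ n : ℕ, 1 ≤ n → ∀ x ∈ wedgeSpace (mixedD a) (mixedC a) (star (a 1) Ω),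
        mixedC a n x ∈ wedgeSpace (mixedD a) (mixedC a) (star (a 1) Ω)
        ∧ mixedD a n x ∈ wedgeSpace (mixedD a) (mixedC a) (star (a 1) Ω)
        ∧ star (mixedC a n) x ∈ wedgeSpace (mixedD a) (mixedC a) (star (a 1) Ω)
        ∧ star (mixedD a n) x ∈ wedgeSpace (mixedD a) (mixedC a) (star (a 1) Ω))
    -- `H = V ⊕ V^*`
    ∧ wedgeSpace (mixedC a) (mixedD a) Ω
        ⊔ wedgeSpace (mixedD a) (mixedC a) (star (a 1) Ω) = ⊤ :=
  fock_decomposes_into_wedge_and_dual_wedge_general a ha Ω hvac hcyc
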